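/- Averaged equicontinuity from L²-bounded discrete derivatives: with the notation of the previous statement, the piecewise constant interpolants ρ̄_τ satisfy ∫₀^{T−t} d(ρ̄_τ(s+t), ρ̄_τ(s)) ds ≤ (t + τ) ∫₀^T A_τ(r) dr for every 0 ≤ t ≤ T, where A_τ is the discrete derivative; consequently (1/h)∫₀^h ∫₀^{T−t} d(ρ̄_τ(s+t), ρ̄_τ(s)) ds dt ≤ (h/2 + τ) ∫₀^T A_τ(r) dr. -/

import Mathlib

/-!
Write `D j = dist (ρ j) (ρ (j + 1))`. By the triangle inequality, `d(ρ̄(s + t), ρ̄(s))` is at most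
the sum of the jumps `D j` with `s ≤ j τ < s + t`. Integrating in `s` over `(0, T - t]`, the jump
`D j` is counted on a set of measure at most `min t (T - j τ)`, which is at most `(t + τ) / τ`
times the length of `(j τ, (j + 1) τ] ∩ (0, T]`, the interval on which the discrete derivative
equals `D j / τ`. Averaging the resulting bound in `t` over `(0, h]` gives the second claim.
-/

open MeasureTheory

section StepFunction

variable {τ : ℝ}

theorem setIntegral_Ioc_comp_ceil_div (f : ℕ → ℝ) (hτ : 0 < τ) {T : ℝ} (hT : 0 ≤ T) :
    ∫ r in Set.Ioc 0 T, f ⌈r / τ⌉₊ =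
      ∑ j ∈ Finset.range ⌈T / τ⌉₊, f (j + 1) * (min ((j + 1) * τ) T - j * τ) := by
  set N := ⌈T / τ⌉₊
  set c : ℕ → ℝ := fun j => min (j * τ) T
  have hc_mono : Monotone c := fun i j hij => min_le_min_right T (by gcongr)
  have hc_of_lt : ∀ j < N, c j = j * τ := fun j hj =>
    min_eq_left ((lt_div_iff₀ hτ).mp (Nat.lt_ceil.mp hj)).le
  have hc_N : c N = T := min_eq_right ((div_le_iff₀ hτ).mp (Nat.le_ceil _))
  have h_const : ∀ j < N,
      Set.EqOn (fun r => f ⌈r / τ⌉₊) (fun _ => f (j + 1)) (Set.Ioc (c j) (c (j + 1))) := by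
    intro j hj r ⟨hr₁, hr₂⟩
    rw [hc_of_lt j hj] at hr₁
    have hr₂ : r ≤ (j + 1) * τ := hr₂.trans (by push_cast [c]; exact min_le_left _ _)
    have h_ceil : ⌈r / τ⌉₊ = j + 1 := by
      rw [Nat.ceil_eq_iff j.succ_ne_zero]
      push_cast
      exact ⟨(lt_div_iff₀ hτ).mpr hr₁, (div_le_iff₀ hτ).mpr hr₂⟩
    simp only [h_ceil]
  have h_int : ∀ j < N, IntervalIntegrable (fun r => f ⌈r / τ⌉₊) volume (c j) (c (j + 1)) := by
    intro j hj
    rw [intervalIntegrable_iff_integrableOn_Ioc_of_le (hc_mono j.le_succ)]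
    exact (integrableOn_const measure_Ioc_lt_top.ne).congr_fun (h_const j hj).symm
      measurableSet_Ioc
  have h_piece : ∀ j < N,
      ∫ r in c j..c (j + 1), f ⌈r / τ⌉₊ = f (j + 1) * (min ((j + 1) * τ) T - j * τ) := by
    intro j hj
    rw [intervalIntegral.integral_of_le (hc_mono j.le_succ),
      setIntegral_congr_fun measurableSet_Ioc (h_const j hj), setIntegral_const,
      Real.volume_real_Ioc_of_le (hc_mono j.le_succ), smul_eq_mul, hc_of_lt j hj, mul_comm]
    push_cast [c]
    rfl
  calc ∫ r in Set.Ioc 0 T, f ⌈r / τ⌉₊ = ∫ r in c 0..c N, f ⌈r / τ⌉₊ := by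
        rw [hc_N, intervalIntegral.integral_of_le (hc_N ▸ hc_mono N.zero_le)]
        simp [c, min_eq_left hT]
    _ = ∑ j ∈ Finset.range N, ∫ r in c j..c (j + 1), f ⌈r / τ⌉₊ :=
        (intervalIntegral.sum_integral_adjacent_intervals h_int).symm
    _ = _ := Finset.sum_congr rfl fun j hj => h_piece j (Finset.mem_range.mp hj)

theorem dist_comp_ceil_div_le_sum_indicator {X : Type*} [PseudoMetricSpace X] (ρ : ℕ → X)
    (hτ : 0 < τ) {T t s : ℝ} (ht : 0 ≤ t) (hsT : s + t ≤ T) :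
    dist (ρ ⌈(s + t) / τ⌉₊) (ρ ⌈s / τ⌉₊) ≤
      ∑ j ∈ Finset.range ⌈T / τ⌉₊,
        (Set.Ioc (j * τ - t) (j * τ)).indicator (fun _ => dist (ρ j) (ρ (j + 1))) s := by
  set m := ⌈s / τ⌉₊
  set n := ⌈(s + t) / τ⌉₊
  have hmn : m ≤ n := Nat.ceil_le_ceil (by gcongr; linarith)
  have hnN : n ≤ ⌈T / τ⌉₊ := Nat.ceil_le_ceil (by gcongr)
  have h_mem : ∀ j ∈ Finset.Ico m n, s ∈ Set.Ioc (j * τ - t) (j * τ) := by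
    intro j hj
    obtain ⟨hmj, hjn⟩ := Finset.mem_Ico.mp hj
    have h_lt : j * τ < s + t := (lt_div_iff₀ hτ).mp (Nat.lt_ceil.mp hjn)
    have h_le : s ≤ j * τ := (div_le_iff₀ hτ).mp ((Nat.le_ceil _).trans (by exact_mod_cast hmj))
    exact ⟨by linarith, h_le⟩
  calc dist (ρ n) (ρ m) = dist (ρ m) (ρ n) := dist_comm _ _
    _ ≤ ∑ j ∈ Finset.Ico m n, dist (ρ j) (ρ (j + 1)) := dist_le_Ico_sum_dist ρ hmn
    _ = ∑ j ∈ Finset.Ico m n,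
          (Set.Ioc (j * τ - t) (j * τ)).indicator (fun _ => dist (ρ j) (ρ (j + 1))) s :=
        Finset.sum_congr rfl fun j hj => (Set.indicator_of_mem (h_mem j hj) (fun _ => _)).symm
    _ ≤ _ := Finset.sum_le_sum_of_subset_of_nonneg
        (fun j hj => Finset.mem_range.mpr ((Finset.mem_Ico.mp hj).2.trans_le hnN))
        fun j _ _ => Set.indicator_nonneg (fun _ _ => dist_nonneg) s

theorem measureReal_Ioc_inter_Ioc_mul_le {a t T : ℝ} (haT : a ≤ T) (ht : 0 ≤ t) (hτ : 0 < τ) :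
    volume.real (Set.Ioc 0 (T - t) ∩ Set.Ioc (a - t) a) * τ ≤ (t + τ) * (min (a + τ) T - a) := by
  set μ := volume.real (Set.Ioc 0 (T - t) ∩ Set.Ioc (a - t) a)
  have hμ_t : μ ≤ t :=
    (measureReal_mono Set.inter_subset_right measure_Ioc_lt_top.ne).trans (by simp [ht])
  have hμ_T : μ ≤ T - a := by
    refine (measureReal_mono (s₂ := Set.Ioc (a - t) (T - t)) ?_ measure_Ioc_lt_top.ne).trans ?_
    · exact fun s ⟨⟨_, hs⟩, hs', _⟩ => ⟨hs', hs⟩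
    · rw [Real.volume_real_Ioc_of_le (by linarith)]
      linarith
  have hμ : 0 ≤ μ := measureReal_nonneg
  rcases min_cases (a + τ) T with ⟨h, _⟩ | ⟨h, _⟩ <;> rw [h] <;> nlinarith

theorem setIntegral_dist_comp_ceil_div_le {X : Type*} [PseudoMetricSpace X] (ρ : ℕ → X)
    (hτ : 0 < τ) {T t : ℝ} (hT : 0 ≤ T) (ht : 0 ≤ t) :
    ∫ s in Set.Ioc 0 (T - t), dist (ρ ⌈(s + t) / τ⌉₊) (ρ ⌈s / τ⌉₊) ≤
      (t + τ) * ∫ r in Set.Ioc 0 T, dist (ρ (⌈r / τ⌉₊ - 1)) (ρ ⌈r / τ⌉₊) / τ := by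
  set D : ℕ → ℝ := fun j => dist (ρ j) (ρ (j + 1))
  set I : ℕ → Set ℝ := fun j => Set.Ioc (j * τ - t) (j * τ)
  have h_int : ∀ j, IntegrableOn ((I j).indicator fun _ => D j) (Set.Ioc 0 (T - t)) :=
    fun j => (integrableOn_const measure_Ioc_lt_top.ne).indicator measurableSet_Ioc
  calc ∫ s in Set.Ioc 0 (T - t), dist (ρ ⌈(s + t) / τ⌉₊) (ρ ⌈s / τ⌉₊)
      ≤ ∫ s in Set.Ioc 0 (T - t),
          ∑ j ∈ Finset.range ⌈T / τ⌉₊, (I j).indicator (fun _ => D j) s := by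
        refine integral_mono_of_nonneg (ae_of_all _ fun _ => dist_nonneg)
          (integrable_finsetSum _ fun j _ => h_int j) ?_
        refine (ae_restrict_iff' measurableSet_Ioc).mpr (ae_of_all _ fun s hs => ?_)
        exact dist_comp_ceil_div_le_sum_indicator ρ hτ ht (by linarith [hs.2])
    _ = ∑ j ∈ Finset.range ⌈T / τ⌉₊, D j / τ * (volume.real (Set.Ioc 0 (T - t) ∩ I j) * τ) := by
        rw [integral_finsetSum _ fun j _ => h_int j]
        refine Finset.sum_congr rfl fun j _ => ?_
        rw [setIntegral_indicator measurableSet_Ioc, setIntegral_const, smul_eq_mul]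
        simp only [I]
        field_simp
    _ ≤ ∑ j ∈ Finset.range ⌈T / τ⌉₊, D j / τ * ((t + τ) * (min ((j + 1) * τ) T - j * τ)) := by
        refine Finset.sum_le_sum fun j hj => mul_le_mul_of_nonneg_left ?_ (by positivity)
        have hjT : j * τ ≤ T := ((lt_div_iff₀ hτ).mp (Nat.lt_ceil.mp (Finset.mem_range.mp hj))).le
        simpa only [add_one_mul] using measureReal_Ioc_inter_Ioc_mul_le hjT ht hτ
    _ = _ := by
        rw [setIntegral_Ioc_comp_ceil_div (fun k => dist (ρ (k - 1)) (ρ k) / τ) hτ hT,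
          Finset.mul_sum]
        refine Finset.sum_congr rfl fun j _ => ?_
        simp only [D, Nat.add_sub_cancel]
        ring

end StepFunction

theorem one_div_mul_setIntegral_Ioc_le {F : ℝ → ℝ} {h τ C : ℝ} (hh : 0 < h)
    (hF₀ : ∀ t ∈ Set.Ioc 0 h, 0 ≤ F t) (hF : ∀ t ∈ Set.Ioc 0 h, F t ≤ (t + τ) * C) :
    1 / h * ∫ t in Set.Ioc 0 h, F t ≤ (h / 2 + τ) * C := by
  have h_mono : ∫ t in Set.Ioc 0 h, F t ≤ ∫ t in Set.Ioc 0 h, (t + τ) * C :=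
    integral_mono_of_nonneg ((ae_restrict_iff' measurableSet_Ioc).mpr (ae_of_all _ hF₀))
      (by fun_prop : Continuous fun t : ℝ => (t + τ) * C).integrableOn_Ioc
      ((ae_restrict_iff' measurableSet_Ioc).mpr (ae_of_all _ hF))
  have h_affine : ∫ t in Set.Ioc 0 h, (t + τ) * C = (h ^ 2 / 2 + τ * h) * C := by
    rw [← intervalIntegral.integral_of_le hh.le, intervalIntegral.integral_mul_const,
      intervalIntegral.integral_add intervalIntegral.intervalIntegrable_id
        intervalIntegrable_const, integral_id, intervalIntegral.integral_const, smul_eq_mul]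
    ring
  calc 1 / h * ∫ t in Set.Ioc 0 h, F t ≤ 1 / h * ((h ^ 2 / 2 + τ * h) * C) :=
        mul_le_mul_of_nonneg_left (h_mono.trans_eq h_affine) (by positivity)
    _ = (h / 2 + τ) * C := by field_simp

theorem averaged_equicontinuity {X : Type*} [MetricSpace X]
    (ρ : ℕ → X) (τ T : ℝ) (hτ : 0 < τ) (hT : 0 < T) :
    (∀ t : ℝ, 0 ≤ t → t ≤ T →
      (∫ s in Set.Ioc (0 : ℝ) (T - t),
          dist (ρ ⌈(s + t) / τ⌉₊) (ρ ⌈s / τ⌉₊)) ≤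
        (t + τ) * ∫ r in Set.Ioc (0 : ℝ) T,
          dist (ρ (⌈r / τ⌉₊ - 1)) (ρ ⌈r / τ⌉₊) / τ) ∧
      ∀ h : ℝ, 0 < h →
        (1 / h) * (∫ t in Set.Ioc (0 : ℝ) h,
            (∫ s in Set.Ioc (0 : ℝ) (T - t),
              dist (ρ ⌈(s + t) / τ⌉₊) (ρ ⌈s / τ⌉₊))) ≤
          (h / 2 + τ) * ∫ r in Set.Ioc (0 : ℝ) T,
            dist (ρ (⌈r / τ⌉₊ - 1)) (ρ ⌈r / τ⌉₊) / τ := by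
  have h_shift (t : ℝ) (ht : 0 ≤ t) := setIntegral_dist_comp_ceil_div_le ρ hτ hT.le ht
  refine ⟨fun t ht _ => h_shift t ht, fun h hh => ?_⟩
  exact one_div_mul_setIntegral_Ioc_le hh
    (fun _ _ => setIntegral_nonneg measurableSet_Ioc fun _ _ => dist_nonneg)
    (fun t ht => h_shift t ht.1.le)
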